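/- arXiv:2012.10070 — 3 statements merged into one kernel-verified Lean document; each statement's English description precedes it below -/
import Mathlib

section
/- For any m ≥ 2 and n ≥ 3, the graph G_{m,n} is not b-monotone: it has an induced subgraph H with b(H) > b(G_{m,n}) = m. Specifically, deleting the vertices v_{m,3},...,v_{m,n} yields an induced subgraph with b-chromatic number at least m+1. -/
/-!
In `G_{m,n}` the last column is a clique of size `m`, and the vertex of that column in the row of
any `v` is adjacent to every neighbour of `v`. A b-vertex of a colour missing from the clique would
therefore need a neighbour coloured like a vertex adjacent to that neighbour, so `b(G_{m,n}) ≤ m`;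
colouring by rows attains `m`. Once `v_{m,3}, …, v_{m,n}` are deleted, the last row keeps only two
vertices, and these together with the first two vertices of the first row can carry two new colours
`m` and `m + 1`: each of the four sees the other new colour in the other row and every row colour
in the last column.
-/

open SimpleGraph

/-- A proper coloring by natural number colors. -/
def IsProperNat {V : Type*} (G : SimpleGraph V) (c : V → ℕ) : Prop :=
  ∀ ⦃v w⦄, G.Adj v w → c v ≠ c w

/-- A Grundy coloring of `G` with colors `1, …, k`: proper, every color used, and
every vertex of color `j` has a neighbor of each color `i < j`. -/
def IsGrundyColoring {V : Type*} (G : SimpleGraph V) (k : ℕ) (c : V → ℕ) : Prop :=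
  (∀ v, c v ∈ Finset.Icc 1 k) ∧ IsProperNat G c ∧
  (∀ i ∈ Finset.Icc 1 k, ∃ v, c v = i) ∧
  (∀ v, ∀ i, 1 ≤ i → i < c v → ∃ w, G.Adj v w ∧ c w = i)

/-- The Grundy number: the maximum number of colors in a Grundy coloring. -/
noncomputable def grundyNumber {V : Type*} (G : SimpleGraph V) : ℕ :=
  sSup {k | ∃ c : V → ℕ, IsGrundyColoring G k c}

/-- A color-dominating (b-)coloring with colors `1, …, k`: proper, and each color class
contains a vertex having neighbors in all the other color classes. -/
def IsBColoring {V : Type*} (G : SimpleGraph V) (k : ℕ) (c : V → ℕ) : Prop :=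
  (∀ v, c v ∈ Finset.Icc 1 k) ∧ IsProperNat G c ∧
  (∀ i ∈ Finset.Icc 1 k, ∃ v, c v = i ∧
    ∀ j ∈ Finset.Icc 1 k, j ≠ i → ∃ w, G.Adj v w ∧ c w = j)

/-- The b-chromatic number: the maximum number of colors in a b-coloring. -/
noncomputable def bChromatic {V : Type*} (G : SimpleGraph V) : ℕ :=
  sSup {k | ∃ c : V → ℕ, IsBColoring G k c}

/-- `m(G) = max {k : d_k ≥ k - 1}` for the non-increasing degree sequence; equivalently
the largest `k` such that `G` has `k` vertices of degree at least `k - 1`. -/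
noncomputable def mParam {V : Type*} (G : SimpleGraph V) : ℕ :=
  sSup {k | ∃ s : Finset V, s.card = k ∧ ∀ v ∈ s, k - 1 ≤ (G.neighborSet v).ncard}

/-- A graph is b-monotone if the b-chromatic number of every induced subgraph is at most
that of the graph itself. -/
def BMonotone {V : Type*} (G : SimpleGraph V) : Prop :=
  ∀ s : Set V, bChromatic (G.induce s) ≤ bChromatic G

/-- The graph `G_{m,n}`: the complete `m`-partite graph with parts
`B_i = {v_{i,1}, …, v_{i,n}}` minus the edges of the cliques `A_j = {v_{1,j}, …, v_{m,j}}`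
for `j = 1, …, n-1`.  Vertex `(i, j) : Fin m × Fin n` is `v_{i+1, j+1}`; so
`(i,j) ~ (i',j')` iff `i ≠ i'` and not (`j = j'` and `j+1 ≤ n-1`, i.e. `(j : ℕ) < n - 1`). -/
def Gmn (m n : ℕ) : SimpleGraph (Fin m × Fin n) where
  Adj a b := a.1 ≠ b.1 ∧ ¬ (a.2 = b.2 ∧ (a.2 : ℕ) < n - 1)
  symm := by
    constructor
    rintro ⟨i, j⟩ ⟨i', j'⟩ ⟨h1, h2⟩
    refine ⟨h1.symm, fun hc => h2 ⟨hc.1.symm, ?_⟩⟩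
    exact hc.1 ▸ hc.2
  loopless := by constructor; rintro ⟨i, j⟩ ⟨h, -⟩; exact h rfl

namespace IsBColoring

variable {V : Type*} {G : SimpleGraph V} {k : ℕ} {c : V → ℕ}

theorem le_card [Fintype V] (hc : IsBColoring G k c) : k ≤ Fintype.card V := by
  classical
  have hsub : Finset.Icc 1 k ⊆ Finset.univ.image c := fun i hi => by
    obtain ⟨v, hv, -⟩ := hc.2.2 i hi
    exact Finset.mem_image.2 ⟨v, Finset.mem_univ _, hv⟩
  simpa using (Finset.card_le_card hsub).trans Finset.card_image_le

theorem le_bChromatic [Finite V] (hc : IsBColoring G k c) : k ≤ bChromatic G := by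
  have := Fintype.ofFinite V
  exact le_csSup ⟨Fintype.card V, fun _ ⟨_, hc'⟩ => hc'.le_card⟩ ⟨c, hc⟩

theorem le_card_of_isClique {K : Finset V} (hK : G.IsClique K)
    (hdom : ∀ v, ∃ u ∈ K, ∀ w, G.Adj v w → G.Adj u w) (hc : IsBColoring G k c) :
    k ≤ K.card := by
  classical
  obtain ⟨hrange, hproper, hb⟩ := hc
  by_contra! hlt
  have hinj : Set.InjOn c K := fun x hx y hy hxy => by
    by_contra hne
    exact hproper (hK hx hy hne) hxy
  -- Some colour `i` is missed by the clique; its b-vertex `v` then needs a neighbour coloured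
  -- like the dominating `u ∈ K`, and that neighbour is adjacent to `u`.
  obtain ⟨i, hi, hiK⟩ := Finset.exists_mem_notMem_of_card_lt_card
    (s := K.image c) (t := Finset.Icc 1 k) (by simpa [Finset.card_image_of_injOn hinj])
  obtain ⟨v, hvi, hv⟩ := hb i hi
  obtain ⟨u, huK, hu⟩ := hdom v
  obtain ⟨w, hvw, hw⟩ := hv (c u) (hrange u) fun h => hiK (h ▸ Finset.mem_image_of_mem c huK)
  exact hproper (hu w hvw) hw.symm

end IsBColoring

theorem isBColoring_of_isClique {V : Type*} {G : SimpleGraph V} {k : ℕ} {c : V → ℕ}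
    {K : Set V} (hrange : ∀ v, c v ∈ Finset.Icc 1 k) (hproper : IsProperNat G c)
    (hK : G.IsClique K) (hcov : ∀ i ∈ Finset.Icc 1 k, ∃ v ∈ K, c v = i) :
    IsBColoring G k c := by
  refine ⟨hrange, hproper, fun i hi => ?_⟩
  obtain ⟨v, hvK, rfl⟩ := hcov i hi
  refine ⟨v, rfl, fun j hj hji => ?_⟩
  obtain ⟨w, hwK, rfl⟩ := hcov j hj
  exact ⟨w, hK hvK hwK (fun h => hji (h ▸ rfl)), rfl⟩

theorem bChromatic_le {V : Type*} {G : SimpleGraph V} {N : ℕ}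
    (h : ∀ k c, IsBColoring G k c → k ≤ N) : bChromatic G ≤ N :=
  csSup_le' fun _ ⟨c, hc⟩ => h _ c hc

theorem isBColoring_induce {V : Type*} {G : SimpleGraph V} {s : Set V} {k : ℕ} {c : V → ℕ}
    (hrange : ∀ v ∈ s, c v ∈ Finset.Icc 1 k)
    (hproper : ∀ v ∈ s, ∀ w ∈ s, G.Adj v w → c v ≠ c w)
    (hb : ∀ i ∈ Finset.Icc 1 k, ∃ v ∈ s, c v = i ∧
      ∀ j ∈ Finset.Icc 1 k, j ≠ i → ∃ w ∈ s, G.Adj v w ∧ c w = j) :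
    IsBColoring (G.induce s) k (c ∘ Subtype.val) := by
  refine ⟨fun v => hrange v v.2, fun v w hvw => hproper v v.2 w w.2 hvw, fun i hi => ?_⟩
  obtain ⟨v, hvs, hvi, hv⟩ := hb i hi
  refine ⟨⟨v, hvs⟩, hvi, fun j hj hji => ?_⟩
  obtain ⟨w, hws, hvw, hwj⟩ := hv j hj hji
  exact ⟨⟨w, hws⟩, hvw, hwj⟩

namespace Gmn

variable {m n : ℕ}

theorem adj_iff {a b : Fin m × Fin n} :
    (Gmn m n).Adj a b ↔ (a.1 : ℕ) ≠ b.1 ∧ ((a.2 : ℕ) ≠ b.2 ∨ n - 1 ≤ a.2) := by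
  simp only [Gmn, ← Fin.val_inj]
  omega

def lastColumn (m n : ℕ) : Finset (Fin m × Fin n) :=
  {p | (p.2 : ℕ) = n - 1}

theorem isClique_lastColumn : (Gmn m n).IsClique (lastColumn m n : Set (Fin m × Fin n)) := by
  intro a ha b hb hab
  simp only [lastColumn, Finset.coe_filter, Finset.mem_univ, true_and, Set.mem_ofPred_eq] at ha hb
  exact adj_iff.2 ⟨fun h => hab (Prod.ext (Fin.ext h) (Fin.ext (by omega))), Or.inr ha.ge⟩

theorem card_lastColumn_le : (lastColumn m n).card ≤ m := by
  have hinj : Set.InjOn Prod.fst (lastColumn m n : Set (Fin m × Fin n)) := fun a ha b hb hab => by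
    simp only [lastColumn, Finset.coe_filter, Finset.mem_univ, true_and, Set.mem_ofPred_eq] at ha hb
    exact Prod.ext hab (Fin.ext (by omega))
  simpa using Finset.card_le_card_of_injOn (t := Finset.univ) Prod.fst
    (fun _ _ => Finset.mem_univ _) hinj

theorem bChromatic_le : bChromatic (Gmn m n) ≤ m := by
  refine _root_.bChromatic_le fun k c hc => le_trans ?_ (card_lastColumn_le (n := n))
  refine hc.le_card_of_isClique isClique_lastColumn fun v =>
    ⟨(v.1, ⟨n - 1, Nat.sub_lt v.2.pos one_pos⟩), by simp [lastColumn], fun w hvw => ?_⟩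
  rw [adj_iff] at hvw ⊢
  exact ⟨hvw.1, Or.inr le_rfl⟩

theorem isBColoring_row (hn : 0 < n) : IsBColoring (Gmn m n) m fun p => p.1 + 1 := by
  refine isBColoring_of_isClique (fun p => by simp [Nat.succ_le_of_lt p.1.2])
    (fun a b hab h => (adj_iff.1 hab).1 (by simpa using h)) isClique_lastColumn fun i hi => ?_
  rw [Finset.mem_Icc] at hi
  exact ⟨(⟨i - 1, by omega⟩, ⟨n - 1, by omega⟩), by simp [lastColumn],
    by dsimp only; omega⟩

theorem bChromatic_eq (hn : 0 < n) : bChromatic (Gmn m n) = m :=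
  bChromatic_le.antisymm (isBColoring_row hn).le_bChromatic

def splitColoring (m : ℕ) (p : Fin m × Fin n) : ℕ :=
  if (p.2 : ℕ) < 2 ∧ ((p.1 : ℕ) = 0 ∨ (p.1 : ℕ) = m - 1) then m + p.2 else p.1 + 1

theorem isBColoring_induce_splitColoring (hm : 2 ≤ m) (hn : 3 ≤ n) :
    IsBColoring ((Gmn m n).induce {p | (p.1 : ℕ) < m - 1 ∨ (p.2 : ℕ) < 2}) (m + 1)
      (splitColoring m ∘ Subtype.val) := by
  refine isBColoring_induce (fun p hp => ?_) (fun p hp q hq hpq => ?_) fun i hi => ?_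
  · have := p.1.2
    simp only [Set.mem_ofPred_eq] at hp
    simp only [splitColoring, Finset.mem_Icc]
    split_ifs <;> omega
  · have := p.1.2
    have := q.1.2
    simp only [Set.mem_ofPred_eq] at hp hq
    rw [adj_iff] at hpq
    simp only [splitColoring]
    split_ifs <;> omega
  -- The b-vertex of a row colour `i < m` sits in the last column, that of a new colour in row
  -- `m - 1`; a neighbour of new colour `j` is taken in whichever of rows `0`, `m - 1` the
  -- b-vertex avoids.
  · rw [Finset.mem_Icc] at hi
    refine ⟨(⟨if i < m then i - 1 else m - 1, by split_ifs <;> omega⟩,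
      ⟨if i < m then n - 1 else i - m, by split_ifs <;> omega⟩), ?_, ?_, fun j hj hji => ?_⟩
    · simp only [Set.mem_ofPred_eq]
      split_ifs <;> omega
    · simp only [splitColoring]
      split_ifs <;> omega
    rw [Finset.mem_Icc] at hj
    refine ⟨(⟨if j < m then j - 1 else if i < m then m - 1 else 0, by split_ifs <;> omega⟩,
      ⟨if j < m then n - 1 else j - m, by split_ifs <;> omega⟩), ?_, ?_, ?_⟩
    · simp only [Set.mem_ofPred_eq]
      split_ifs <;> omega
    · simp only [adj_iff]
      split_ifs <;> omega
    · simp only [splitColoring]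
      split_ifs <;> omega

end Gmn

/-- For `m ≥ 2`, `n ≥ 3`, `G_{m,n}` is not b-monotone: deleting the
vertices `v_{m,3}, …, v_{m,n}` (keeping, in 0-based terms, the vertices `(i,j)` with
`i < m - 1` or `j < 2`) yields an induced subgraph with b-chromatic number at least
`m + 1 > m = b(G_{m,n})`. -/
theorem Gmn_not_bMonotone (m n : ℕ) (hm : 2 ≤ m) (hn : 3 ≤ n) :
    m + 1 ≤ bChromatic ((Gmn m n).induce {p : Fin m × Fin n | (p.1 : ℕ) < m - 1 ∨ (p.2 : ℕ) < 2})
      ∧ bChromatic (Gmn m n) = m ∧ ¬ BMonotone (Gmn m n) := by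
  have hH := (Gmn.isBColoring_induce_splitColoring hm hn).le_bChromatic
  have hG := Gmn.bChromatic_eq (m := m) (by omega : 0 < n)
  refine ⟨hH, hG, fun hmono => ?_⟩
  have := hmono {p | (p.1 : ℕ) < m - 1 ∨ (p.2 : ℕ) < 2}
  omega
end

section
/- The tree atom T_k is not pivoted; consequently b(T_k) = m(T_k). -/
open SimpleGraph

/-- Vertex type of the tree atoms: `atomV n` has `2^n` vertices; `T_k` lives on `atomV (k-1)`. -/
def atomV : ℕ → Type
  | 0 => Unit
  | n + 1 => atomV n ⊕ atomV n

instance atomV.fintype : ∀ n, Fintype (atomV n)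
  | 0 => inferInstanceAs (Fintype Unit)
  | n + 1 => by
    have := atomV.fintype n
    exact inferInstanceAs (Fintype (atomV n ⊕ atomV n))

/-- Adjacency of the tree atom: `T_{k+1}` is `T_k` together with a new leaf attached to
every vertex of `T_k`. -/
def atomAdj : (n : ℕ) → atomV n → atomV n → Prop
  | 0, _, _ => False
  | n + 1, Sum.inl a, Sum.inl b => atomAdj n a b
  | _ + 1, Sum.inl a, Sum.inr b => a = b
  | _ + 1, Sum.inr a, Sum.inl b => a = b
  | _ + 1, Sum.inr _, Sum.inr _ => False

theorem atomAdj_symm : ∀ n (a b : atomV n), atomAdj n a b → atomAdj n b a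
  | 0, _, _, h => h.elim
  | n + 1, Sum.inl a, Sum.inl b, h => atomAdj_symm n a b h
  | _ + 1, Sum.inl _, Sum.inr _, h => h.symm
  | _ + 1, Sum.inr _, Sum.inl _, h => h.symm
  | _ + 1, Sum.inr _, Sum.inr _, h => h.elim

theorem atomAdj_irrefl : ∀ n (a : atomV n), ¬ atomAdj n a a
  | 0, _, h => h.elim
  | n + 1, Sum.inl a, h => atomAdj_irrefl n a h
  | _ + 1, Sum.inr _, h => h.elim

def atomGraph (n : ℕ) : SimpleGraph (atomV n) where
  Adj := atomAdj n
  symm := ⟨fun a b h => atomAdj_symm n a b h⟩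
  loopless := ⟨fun a h => atomAdj_irrefl n a h⟩

/-- The tree atom `T_k` (for `k ≥ 1`), on `2^(k-1)` vertices. -/
def treeAtom (k : ℕ) : SimpleGraph (atomV (k - 1)) := atomGraph (k - 1)

/-- A vertex is dense if its degree is at least `m(G) - 1`. -/
def DenseVtx {V : Type*} (G : SimpleGraph V) (v : V) : Prop :=
  mParam G - 1 ≤ (G.neighborSet v).ncard

/-- A tree (here: graph) is pivoted if it has exactly `m(G)` dense vertices and there is a
non-dense vertex `v` such that every dense vertex is adjacent to `v` or to a dense vertex
adjacent to `v`, and every dense vertex adjacent to `v` and to another dense vertex has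
degree exactly `m(G) - 1`. -/
def Pivoted {V : Type*} (G : SimpleGraph V) : Prop :=
  {v : V | DenseVtx G v}.ncard = mParam G ∧
  ∃ v : V, ¬ DenseVtx G v ∧
    (∀ u, DenseVtx G u → G.Adj u v ∨ ∃ w, DenseVtx G w ∧ G.Adj w v ∧ G.Adj u w) ∧
    (∀ u, DenseVtx G u → G.Adj u v → (∃ w, DenseVtx G w ∧ w ≠ v ∧ G.Adj u w) →
      (G.neighborSet u).ncard = mParam G - 1)

/-! Read a vertex of `T_{n+1}` as an `n`-bit number, the leaves added at the last doubling being
the numbers with top bit `2 ^ (n - 1)`. Then `x > 0` is the child of `x` with its top bit cleared,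
`T_{n+1}` is the binomial tree, and `x` has degree `n - log₂ x`. So the vertices of degree at least
`d` are the `x < 2 ^ (n + 1 - d)`, and the dense ones are the `x < 2 ^ j`, `j = n + 2 - m`. A
vertex outside has at most one dense neighbour, its parent; in a pivoted tree all dense vertices
would therefore lie in the closed neighbourhood of one dense vertex, which contains at most `j + 1`
of them. But `2 ≤ m = 2 ^ j ≤ j + 1` forces `j = 1`, `m = 2`, hence `j = n`: every vertex is dense.

`b ≤ m` holds in every graph. Conversely the vertices `x < m`, coloured `x + 1`, become
b-vertices: at least one neighbour of `x` is below `m`, so at most `m - 2` colours are missing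
around it, and `x` has `n - j = m - 2` non-dense children `x + 2 ^ t`, `j ≤ t < n`, to carry them;
every other vertex only has to avoid its parent's colour. -/

section MParam

variable {V : Type*} {G : SimpleGraph V}

variable (G) in
def MParamAdmissible (k : ℕ) : Prop :=
  ∃ s : Finset V, s.card = k ∧ ∀ v ∈ s, k - 1 ≤ (G.neighborSet v).ncard

theorem MParamAdmissible.le_natCard [Finite V] {k : ℕ} (h : MParamAdmissible G k) :
    k ≤ Nat.card V := by
  obtain ⟨s, rfl, -⟩ := h
  have := Fintype.ofFinite V
  simpa only [Nat.card_eq_fintype_card] using s.card_le_univ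

theorem bddAbove_mParamAdmissible [Finite V] : BddAbove {k | MParamAdmissible G k} :=
  ⟨Nat.card V, fun _ h => h.le_natCard⟩

theorem MParamAdmissible.le_mParam [Finite V] {k : ℕ} (h : MParamAdmissible G k) :
    k ≤ mParam G :=
  le_csSup bddAbove_mParamAdmissible h

theorem mParamAdmissible_mParam [Finite V] : MParamAdmissible G (mParam G) :=
  Nat.sSup_mem ⟨0, (⟨∅, rfl, by simp⟩ : MParamAdmissible G 0)⟩ bddAbove_mParamAdmissible

theorem mParam_le_natCard [Finite V] : mParam G ≤ Nat.card V :=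
  mParamAdmissible_mParam.le_natCard

theorem SimpleGraph.Adj.mParamAdmissible_two [Finite V] {v w : V} (h : G.Adj v w) :
    MParamAdmissible G 2 := by
  classical
  refine ⟨{v, w}, Finset.card_pair h.ne, ?_⟩
  have hpos : ∀ {a b}, G.Adj a b → 2 - 1 ≤ (G.neighborSet a).ncard := fun hab =>
    (Set.ncard_pos (Set.toFinite _)).mpr ⟨_, hab⟩
  simp only [Finset.mem_insert, Finset.mem_singleton, forall_eq_or_imp, forall_eq]
  exact ⟨hpos h, hpos h.symm⟩

theorem IsBColoring.mParamAdmissible [Finite V] {k : ℕ} {c : V → ℕ} (h : IsBColoring G k c) :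
    MParamAdmissible G k := by
  classical
  obtain ⟨-, -, hb⟩ := h
  choose b hb_col hb_nbr using hb
  refine ⟨(Finset.Icc 1 k).attach.image fun i => b i.1 i.2, ?_, ?_⟩
  · rw [Finset.card_image_of_injective, Finset.card_attach, Nat.card_Icc, add_tsub_cancel_right]
    intro i i' hii'
    exact Subtype.ext (by simpa only [hb_col] using congrArg c hii')
  · simp only [Finset.mem_image, Finset.mem_attach, true_and, forall_exists_index]
    rintro _ ⟨i, hi⟩ rfl
    have hsub : ((Finset.Icc 1 k).erase i : Set ℕ) ⊆ c '' G.neighborSet (b i hi) := by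
      intro j hj
      rw [Finset.coe_erase, Set.mem_sdiff, Set.mem_singleton_iff] at hj
      exact hb_nbr i hi j hj.1 hj.2
    calc k - 1 = ((Finset.Icc 1 k).erase i).card := by
          rw [Finset.card_erase_of_mem hi, Nat.card_Icc, add_tsub_cancel_right]
      _ ≤ (c '' G.neighborSet (b i hi)).ncard := by
          rw [← Set.ncard_coe_finset]; exact Set.ncard_le_ncard hsub (Set.toFinite _)
      _ ≤ (G.neighborSet (b i hi)).ncard := Set.ncard_image_le (Set.toFinite _)

theorem bChromatic_le_mParam [Finite V] : bChromatic G ≤ mParam G :=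
  csSup_le' fun _ ⟨_, hc⟩ => hc.mParamAdmissible.le_mParam

theorem IsBColoring.le_bChromatic_s10 [Finite V] {k : ℕ} {c : V → ℕ} (h : IsBColoring G k c) :
    k ≤ bChromatic G :=
  le_csSup ⟨mParam G, fun _ ⟨_, hc⟩ => hc.mParamAdmissible.le_mParam⟩ ⟨c, h⟩

theorem isBColoring_one [Nonempty V] (h : ∀ v w, ¬ G.Adj v w) : IsBColoring G 1 fun _ => 1 := by
  refine ⟨fun _ => by simp, fun v w hvw => (h v w hvw).elim, fun i hi => ?_⟩
  obtain rfl : i = 1 := by simpa using hi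
  exact ⟨Classical.arbitrary V, rfl, fun j hj hj1 => (hj1 (by simpa using hj)).elim⟩

theorem not_pivoted_of_mParam_le_one (h : mParam G ≤ 1) : ¬ Pivoted G :=
  fun ⟨_, _, hv, _⟩ => hv (by rw [DenseVtx, Nat.sub_eq_zero_of_le h]; exact Nat.zero_le _)

end MParam

def dropTopBit (y : ℕ) : ℕ := y - 2 ^ Nat.log 2 y

theorem dropTopBit_lt {y : ℕ} (hy : y ≠ 0) : dropTopBit y < y :=
  Nat.sub_lt (Nat.pos_of_ne_zero hy) (Nat.two_pow_pos _)

theorem log_add_two_pow {x t : ℕ} (h : x < 2 ^ t) : Nat.log 2 (x + 2 ^ t) = t :=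
  Nat.log_eq_of_pow_le_of_lt_pow (by omega) (by rw [pow_succ]; omega)

theorem dropTopBit_add_two_pow {x t : ℕ} (h : x < 2 ^ t) : dropTopBit (x + 2 ^ t) = x := by
  rw [dropTopBit, log_add_two_pow h, Nat.add_sub_cancel]

theorem dropTopBit_add_two_pow_log {y : ℕ} (hy : y ≠ 0) :
    dropTopBit y < 2 ^ Nat.log 2 y ∧ dropTopBit y + 2 ^ Nat.log 2 y = y := by
  have h₁ := Nat.pow_log_le_self 2 hy
  have h₂ := Nat.lt_pow_succ_log_self Nat.one_lt_two y
  rw [pow_succ] at h₂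
  constructor <;> rw [dropTopBit] <;> omega

def binomialTree : SimpleGraph ℕ where
  Adj x y := y ≠ 0 ∧ dropTopBit y = x ∨ x ≠ 0 ∧ dropTopBit x = y
  symm := ⟨fun _ _ => Or.symm⟩
  loopless := ⟨fun x h => by rcases h with ⟨hx, h⟩ | ⟨hx, h⟩ <;> exact (dropTopBit_lt hx).ne h⟩

instance : DecidableRel binomialTree.Adj :=
  fun _ _ => inferInstanceAs (Decidable (_ ∨ _))

theorem binomialTree_adj_iff {x y : ℕ} : binomialTree.Adj x y ↔
    (∃ t, x < 2 ^ t ∧ y = x + 2 ^ t) ∨ ∃ t, y < 2 ^ t ∧ x = y + 2 ^ t := by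
  have child {a b : ℕ} : b ≠ 0 ∧ dropTopBit b = a ↔ ∃ t, a < 2 ^ t ∧ b = a + 2 ^ t := by
    constructor
    · rintro ⟨hb, rfl⟩
      exact ⟨_, (dropTopBit_add_two_pow_log hb).1, (dropTopBit_add_two_pow_log hb).2.symm⟩
    · rintro ⟨t, ht, rfl⟩
      exact ⟨(Nat.two_pow_pos t).ne' ∘ Nat.eq_zero_of_add_eq_zero_left,
        dropTopBit_add_two_pow ht⟩
  exact or_congr child child

theorem binomialTree_adj_add_two_pow {x t : ℕ} (h : x < 2 ^ t) :
    binomialTree.Adj x (x + 2 ^ t) :=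
  binomialTree_adj_iff.mpr (Or.inl ⟨t, h, rfl⟩)

theorem binomialTree_adj_add_two_pow_iff {x y n : ℕ} (hx : x < 2 ^ n) (hy : y < 2 ^ n) :
    binomialTree.Adj x (y + 2 ^ n) ↔ x = y := by
  have hdrop := dropTopBit_add_two_pow hy
  constructor
  · rintro (⟨-, h⟩ | ⟨hx0, h⟩)
    · exact h.symm.trans hdrop
    · have := dropTopBit_lt hx0
      omega
  · rintro rfl
    exact binomialTree_adj_add_two_pow hy

theorem not_binomialTree_adj_add_two_pow {x y n : ℕ} (hx : x < 2 ^ n) (hy : y < 2 ^ n) :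
    ¬ binomialTree.Adj (x + 2 ^ n) (y + 2 ^ n) := by
  rintro (⟨-, h⟩ | ⟨-, h⟩)
  · rw [dropTopBit_add_two_pow hy] at h; omega
  · rw [dropTopBit_add_two_pow hx] at h; omega

theorem dropTopBit_eq_of_adj {x y j : ℕ} (h : binomialTree.Adj x y) (hx : x < 2 ^ j)
    (hy : 2 ^ j ≤ y) : dropTopBit y = x := by
  rcases h with ⟨-, h⟩ | ⟨hx0, rfl⟩
  · exact h
  · have := dropTopBit_lt hx0
    omega

namespace atomV

def toNat : {n : ℕ} → atomV n → ℕ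
  | 0, _ => 0
  | _ + 1, Sum.inl a => toNat a
  | n + 1, Sum.inr a => toNat a + 2 ^ n

theorem toNat_lt : ∀ {n : ℕ} (v : atomV n), v.toNat < 2 ^ n
  | 0, _ => Nat.one_pos
  | n + 1, Sum.inl a => (toNat_lt a).trans (Nat.pow_lt_pow_succ Nat.one_lt_two)
  | n + 1, Sum.inr a => by have := toNat_lt a; rw [toNat, pow_succ]; omega

theorem toNat_injective : ∀ {n : ℕ}, Function.Injective (toNat (n := n))
  | 0, (), (), _ => rfl
  | n + 1, Sum.inl a, Sum.inl b, h => congrArg Sum.inl (toNat_injective (n := n) h)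
  | n + 1, Sum.inl a, Sum.inr b, h => by have := toNat_lt a; simp only [toNat] at h; omega
  | n + 1, Sum.inr a, Sum.inl b, h => by have := toNat_lt b; simp only [toNat] at h; omega
  | n + 1, Sum.inr a, Sum.inr b, h =>
      congrArg Sum.inr (toNat_injective (n := n) (Nat.add_right_cancel h))

theorem exists_toNat_eq : ∀ {n x : ℕ}, x < 2 ^ n → ∃ v : atomV n, v.toNat = x
  | 0, x, hx => ⟨(), by simp only [toNat]; omega⟩
  | n + 1, x, hx => by
      rw [pow_succ] at hx
      by_cases h : x < 2 ^ n
      · obtain ⟨v, hv⟩ := exists_toNat_eq h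
        exact ⟨Sum.inl v, hv⟩
      · obtain ⟨v, hv⟩ := exists_toNat_eq (n := n) (x := x - 2 ^ n) (by omega)
        exact ⟨Sum.inr v, by simp only [toNat, hv]; omega⟩

theorem ncard_setOf_toNat {n : ℕ} (p : ℕ → Prop) :
    {v : atomV n | p v.toNat}.ncard = {x | x < 2 ^ n ∧ p x}.ncard := by
  rw [← Set.ncard_image_of_injective _ toNat_injective]
  congr 1
  ext x
  constructor
  · rintro ⟨v, hv, rfl⟩
    exact ⟨toNat_lt v, hv⟩
  · rintro ⟨hx, hpx⟩
    obtain ⟨v, rfl⟩ := exists_toNat_eq hx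
    exact ⟨v, hpx, rfl⟩

end atomV

open atomV

theorem atomGraph_adj_iff : ∀ {n : ℕ} (v w : atomV n),
    (atomGraph n).Adj v w ↔ binomialTree.Adj v.toNat w.toNat
  | 0, _, _ => iff_of_false id (binomialTree.loopless.irrefl 0)
  | _ + 1, Sum.inl a, Sum.inl b => atomGraph_adj_iff a b
  | n + 1, Sum.inl a, Sum.inr b => by
      show a = b ↔ binomialTree.Adj a.toNat (b.toNat + 2 ^ n)
      rw [binomialTree_adj_add_two_pow_iff (toNat_lt a) (toNat_lt b), toNat_injective.eq_iff]
  | n + 1, Sum.inr a, Sum.inl b => by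
      show a = b ↔ binomialTree.Adj (a.toNat + 2 ^ n) b.toNat
      rw [binomialTree.adj_comm, binomialTree_adj_add_two_pow_iff (toNat_lt b) (toNat_lt a),
        toNat_injective.eq_iff, eq_comm]
  | _ + 1, Sum.inr a, Sum.inr b =>
      iff_of_false id (not_binomialTree_adj_add_two_pow (toNat_lt a) (toNat_lt b))

def neighborsBelow (n x : ℕ) : Finset ℕ :=
  ((Finset.range n).filter (x < 2 ^ ·)).image (x + 2 ^ ·) ∪
    if x = 0 then ∅ else {dropTopBit x}

theorem mem_neighborsBelow {n x y : ℕ} (hx : x < 2 ^ n) :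
    y ∈ neighborsBelow n x ↔ y < 2 ^ n ∧ binomialTree.Adj x y := by
  simp only [neighborsBelow, Finset.mem_union, Finset.mem_image, Finset.mem_filter,
    Finset.mem_range]
  constructor
  · rintro (⟨t, ⟨htn, hxt⟩, rfl⟩ | hy)
    · have := Nat.pow_le_pow_right Nat.two_pos htn
      rw [pow_succ] at this
      exact ⟨by omega, binomialTree_adj_add_two_pow hxt⟩
    · split_ifs at hy with hx0
      · simp at hy
      · rw [Finset.mem_singleton.mp hy]
        exact ⟨(dropTopBit_lt hx0).trans hx, Or.inr ⟨hx0, rfl⟩⟩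
  · rintro ⟨hy, ⟨hy0, rfl⟩ | ⟨hx0, rfl⟩⟩
    · obtain ⟨hlt, heq⟩ := dropTopBit_add_two_pow_log hy0
      exact Or.inl ⟨_, ⟨Nat.log_lt_of_lt_pow hy0 hy, hlt⟩, heq⟩
    · simp [hx0]

theorem card_neighborsBelow {n x : ℕ} (hx : x < 2 ^ n) :
    (neighborsBelow n x).card = n - Nat.log 2 x := by
  have hinj : Function.Injective (x + 2 ^ · : ℕ → ℕ) :=
    fun a b h => Nat.pow_right_injective le_rfl (Nat.add_left_cancel h)
  rw [neighborsBelow]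
  rcases eq_or_ne x 0 with rfl | hx0
  · rw [if_pos rfl, Finset.union_empty, Finset.card_image_of_injective _ hinj,
      Finset.filter_true_of_mem fun t _ => Nat.two_pow_pos t, Finset.card_range,
      Nat.log_zero_right, Nat.sub_zero]
  · have hlog : Nat.log 2 x < n := Nat.log_lt_of_lt_pow hx0 hx
    have hchildren : (Finset.range n).filter (x < 2 ^ ·) = Finset.Ico (Nat.log 2 x + 1) n := by
      ext t
      simp only [Finset.mem_filter, Finset.mem_range, Finset.mem_Ico, Order.add_one_le_iff,
        Nat.log_lt_iff_lt_pow Nat.one_lt_two hx0]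
      exact and_comm
    rw [if_neg hx0, Finset.card_union_of_disjoint, Finset.card_image_of_injective _ hinj,
      hchildren, Nat.card_Ico, Finset.card_singleton]
    · omega
    · rw [Finset.disjoint_singleton_right, Finset.mem_image]
      rintro ⟨t, -, ht⟩
      exact (dropTopBit_lt hx0).not_ge (ht ▸ Nat.le_add_right _ _)

theorem ncard_neighborSet_atomGraph {n : ℕ} (v : atomV n) :
    ((atomGraph n).neighborSet v).ncard = n - Nat.log 2 v.toNat := by
  have hnbr : (atomGraph n).neighborSet v = {w | binomialTree.Adj v.toNat w.toNat} :=
    Set.ext (atomGraph_adj_iff v)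
  have hvals : {x | x < 2 ^ n ∧ binomialTree.Adj v.toNat x} = ↑(neighborsBelow n v.toNat) :=
    Set.ext fun _ => (mem_neighborsBelow (toNat_lt v)).symm
  rw [hnbr, ncard_setOf_toNat (binomialTree.Adj v.toNat), hvals, Set.ncard_coe_finset,
    card_neighborsBelow (toNat_lt v)]

theorem le_ncard_neighborSet_atomGraph_iff {n d : ℕ} (hd : d ≤ n) (v : atomV n) :
    d ≤ ((atomGraph n).neighborSet v).ncard ↔ v.toNat < 2 ^ (n + 1 - d) := by
  rw [ncard_neighborSet_atomGraph]
  rcases eq_or_ne v.toNat 0 with h0 | h0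
  · simp only [h0, Nat.log_zero_right, Nat.sub_zero, Nat.two_pow_pos, hd]
  · have := Nat.log_lt_of_lt_pow h0 (toNat_lt v)
    rw [← Nat.log_lt_iff_lt_pow Nat.one_lt_two h0]
    omega

theorem ncard_setOf_toNat_lt {n j : ℕ} (hj : j ≤ n) :
    {v : atomV n | v.toNat < 2 ^ j}.ncard = 2 ^ j := by
  have hsub : (2 : ℕ) ^ j ≤ 2 ^ n := Nat.pow_le_pow_right Nat.two_pos hj
  have hset : {x | x < 2 ^ n ∧ x < 2 ^ j} = ↑(Finset.range (2 ^ j)) := by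
    ext x
    rw [Finset.coe_range, Set.mem_Iio, Set.mem_ofPred_eq]
    omega
  rw [ncard_setOf_toNat (· < 2 ^ j), hset, Set.ncard_coe_finset, Finset.card_range]

theorem MParamAdmissible.le_succ_and_le_two_pow {n q : ℕ} (h : MParamAdmissible (atomGraph n) q)
    (hq : 1 ≤ q) : q ≤ n + 1 ∧ q ≤ 2 ^ (n + 2 - q) := by
  obtain ⟨s, hs, hdeg⟩ := h
  obtain ⟨v, hv⟩ := Finset.card_pos.mp (hs ▸ hq)
  have hqn : q ≤ n + 1 := by
    have := hdeg v hv
    rw [ncard_neighborSet_atomGraph] at this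
    omega
  have hsub : s.image toNat ⊆ Finset.range (2 ^ (n + 2 - q)) := by
    intro x hx
    obtain ⟨u, hu, rfl⟩ := Finset.mem_image.mp hx
    rw [Finset.mem_range, show n + 2 - q = n + 1 - (q - 1) by omega]
    exact (le_ncard_neighborSet_atomGraph_iff (by omega) u).mp (hdeg u hu)
  refine ⟨hqn, ?_⟩
  calc q = (s.image toNat).card := by rw [Finset.card_image_of_injective _ toNat_injective, hs]
    _ ≤ 2 ^ (n + 2 - q) := (Finset.card_le_card hsub).trans_eq (Finset.card_range _)

theorem two_le_mParam_atomGraph {n : ℕ} (hn : n ≠ 0) : 2 ≤ mParam (atomGraph n) := by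
  obtain ⟨u, hu⟩ := exists_toNat_eq (n := n) (x := 0) (Nat.two_pow_pos n)
  obtain ⟨w, hw⟩ := exists_toNat_eq (n := n) (x := 1) (Nat.one_lt_two_pow hn)
  have huw : (atomGraph n).Adj u w := by
    rw [atomGraph_adj_iff, hu, hw]
    exact binomialTree_adj_add_two_pow (t := 0) Nat.one_pos
  exact huw.mParamAdmissible_two.le_mParam

theorem denseVtx_atomGraph_iff {n : ℕ} (hm : 2 ≤ mParam (atomGraph n)) (v : atomV n) :
    DenseVtx (atomGraph n) v ↔ v.toNat < 2 ^ (n + 2 - mParam (atomGraph n)) := by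
  have hmn := ((mParamAdmissible_mParam (G := atomGraph n)).le_succ_and_le_two_pow (by omega)).1
  rw [DenseVtx, le_ncard_neighborSet_atomGraph_iff (by omega),
    show n + 1 - (mParam (atomGraph n) - 1) = n + 2 - mParam (atomGraph n) by omega]

theorem two_pow_le_succ_of_near {n j : ℕ} {v : atomV n} (hv : 2 ^ j ≤ v.toNat)
    (hnear : ∀ u : atomV n, u.toNat < 2 ^ j → (atomGraph n).Adj u v ∨
      ∃ w : atomV n, w.toNat < 2 ^ j ∧ (atomGraph n).Adj w v ∧ (atomGraph n).Adj u w) :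
    2 ^ j ≤ j + 1 := by
  have parent_eq : ∀ w : atomV n, w.toNat < 2 ^ j → (atomGraph n).Adj w v →
      w.toNat = dropTopBit v.toNat := fun w hw hwv =>
    (dropTopBit_eq_of_adj ((atomGraph_adj_iff w v).mp hwv) hw hv).symm
  obtain ⟨u₀, hu₀⟩ := exists_toNat_eq (n := n) (x := 0) (Nat.two_pow_pos n)
  obtain ⟨w, hw, hwv⟩ : ∃ w : atomV n, w.toNat < 2 ^ j ∧ (atomGraph n).Adj w v := by
    have hu₀j : u₀.toNat < 2 ^ j := hu₀ ▸ Nat.two_pow_pos j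
    rcases hnear u₀ hu₀j with h | ⟨w, hw, hwv, -⟩
    exacts [⟨u₀, hu₀j, h⟩, ⟨w, hw, hwv⟩]
  set F := insert w.toNat (neighborsBelow j w.toNat)
  have hcover : {u : atomV n | u.toNat < 2 ^ j} ⊆ {u | u.toNat ∈ F} := by
    intro u hu
    rw [Set.mem_ofPred, Finset.mem_insert, mem_neighborsBelow hw]
    rcases hnear u hu with h | ⟨w', hw', hw'v, huw'⟩
    · exact Or.inl ((parent_eq u hu h).trans (parent_eq w hw hwv).symm)
    · obtain rfl : w' = w :=
        toNat_injective ((parent_eq w' hw' hw'v).trans (parent_eq w hw hwv).symm)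
      exact Or.inr ⟨hu, ((atomGraph_adj_iff u w').mp huw').symm⟩
  have hjn : j ≤ n :=
    ((Nat.pow_lt_pow_iff_right Nat.one_lt_two).mp (hv.trans_lt (toNat_lt v))).le
  calc 2 ^ j = {u : atomV n | u.toNat < 2 ^ j}.ncard := (ncard_setOf_toNat_lt hjn).symm
    _ ≤ {u : atomV n | u.toNat ∈ F}.ncard := Set.ncard_le_ncard hcover (Set.toFinite _)
    _ ≤ F.card := by
      rw [ncard_setOf_toNat, ← Set.ncard_coe_finset]
      exact Set.ncard_le_ncard (fun x hx => hx.2) F.finite_toSet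
    _ ≤ j + 1 := (Finset.card_insert_le _ _).trans (by rw [card_neighborsBelow hw]; omega)

theorem mParam_atomGraph_zero_le : mParam (atomGraph 0) ≤ 1 :=
  mParam_le_natCard.trans_eq (Nat.card_unique (α := Unit))

theorem not_pivoted_atomGraph (n : ℕ) : ¬ Pivoted (atomGraph n) := by
  rcases eq_or_ne n 0 with rfl | hn
  · exact not_pivoted_of_mParam_le_one mParam_atomGraph_zero_le
  rintro ⟨hcount, v, hv, hnear, -⟩
  have hm := two_le_mParam_atomGraph hn
  set m := mParam (atomGraph n)
  set j := n + 2 - m with hj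
  have hvj : 2 ^ j ≤ v.toNat := not_lt.mp (mt (denseVtx_atomGraph_iff hm v).mpr hv)
  have hjn : j < n := (Nat.pow_lt_pow_iff_right Nat.one_lt_two).mp (hvj.trans_lt (toNat_lt v))
  have hdense : {u | DenseVtx (atomGraph n) u} = {u | u.toNat < 2 ^ j} :=
    Set.ext (denseVtx_atomGraph_iff hm)
  have hmj : m = 2 ^ j := by rw [← hcount, hdense, ncard_setOf_toNat_lt hjn.le]
  have hsmall : 2 ^ j ≤ j + 1 := two_pow_le_succ_of_near hvj fun u hu => by
    simpa only [denseVtx_atomGraph_iff hm] using hnear u ((denseVtx_atomGraph_iff hm u).mpr hu)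
  obtain ⟨i, hi⟩ := Nat.exists_eq_add_one_of_ne_zero (show j ≠ 0 by rintro h; rw [h] at hmj; omega)
  rw [hi, pow_succ] at hmj hsmall
  have := Nat.lt_two_pow_self (n := i)
  omega

def missingLabels (q p : ℕ) : List ℕ :=
  ((Finset.range q).filter fun y => y ≠ p ∧ ¬ binomialTree.Adj p y).sort (· ≤ ·)

theorem mem_missingLabels {q p y : ℕ} :
    y ∈ missingLabels q p ↔ y < q ∧ y ≠ p ∧ ¬ binomialTree.Adj p y := by
  rw [missingLabels, Finset.mem_sort, Finset.mem_filter, Finset.mem_range]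

theorem length_missingLabels_le {q p : ℕ} (hq : 2 ≤ q) (hp : p < q) :
    (missingLabels q p).length ≤ q - 2 := by
  obtain ⟨r, hr, hpr⟩ : ∃ r < q, binomialTree.Adj p r := by
    rcases eq_or_ne p 0 with rfl | hp0
    · exact ⟨1, by omega, binomialTree_adj_add_two_pow (t := 0) Nat.one_pos⟩
    · exact ⟨dropTopBit p, (dropTopBit_lt hp0).trans hp, Or.inr ⟨hp0, rfl⟩⟩
  have hsub : (Finset.range q).filter (fun y => y ≠ p ∧ ¬ binomialTree.Adj p y) ⊆
      ((Finset.range q).erase p).erase r := by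
    intro y hy
    simp only [Finset.mem_filter, Finset.mem_erase] at hy ⊢
    exact ⟨fun hyr => hy.2.2 (hyr ▸ hpr), hy.2.1, hy.1⟩
  have hrp : r ∈ (Finset.range q).erase p :=
    Finset.mem_erase.mpr ⟨hpr.ne.symm, Finset.mem_range.mpr hr⟩
  have := Finset.card_le_card hsub
  rw [Finset.card_erase_of_mem hrp, Finset.card_erase_of_mem (Finset.mem_range.mpr hp),
    Finset.card_range] at this
  rw [missingLabels, Finset.length_sort]
  omega

/-- The vertex `x` gets colour `bLabel n q x + 1`. The child `p + 2 ^ t` of a b-vertex `p < q`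
carries the `(n - 1 - t)`-th label missing around `p`, as long as there is one. -/
def bLabel (n q x : ℕ) : ℕ :=
  if x = 0 ∨ x < q then x
  else if h : dropTopBit x < q ∧ n - 1 - Nat.log 2 x < (missingLabels q (dropTopBit x)).length then
    (missingLabels q (dropTopBit x))[n - 1 - Nat.log 2 x]
  else if bLabel n q (dropTopBit x) = 0 then 1 else 0
termination_by x
decreasing_by exact dropTopBit_lt (by omega)

theorem bLabel_of_lt {n q x : ℕ} (hx : x < q) : bLabel n q x = x := by
  rw [bLabel, if_pos (Or.inr hx)]

theorem bLabel_lt {n q : ℕ} (hq : 2 ≤ q) (x : ℕ) : bLabel n q x < q := by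
  rw [bLabel]
  split_ifs
  · omega
  · exact (mem_missingLabels.mp (List.getElem_mem _)).1
  · omega
  · omega

theorem bLabel_add_two_pow {n q p t : ℕ} (hp : p < q) (hpt : p < 2 ^ t) (hqt : q ≤ 2 ^ t)
    (hl : n - 1 - t < (missingLabels q p).length) :
    bLabel n q (p + 2 ^ t) = (missingLabels q p)[n - 1 - t] := by
  have hd := dropTopBit_add_two_pow hpt
  have hlog := log_add_two_pow hpt
  rw [bLabel, if_neg (by omega), dif_pos (by rw [hd, hlog]; exact ⟨hp, hl⟩)]
  simp only [hd, hlog]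

theorem bLabel_add_two_pow_ne {n q x t : ℕ} (hx : x < 2 ^ t) :
    bLabel n q (x + 2 ^ t) ≠ bLabel n q x := by
  have hd := dropTopBit_add_two_pow hx
  have ht := Nat.two_pow_pos t
  conv_lhs => rw [bLabel]
  split_ifs with h₁ h₂ h₃
  · rw [bLabel_of_lt (by omega)]
    omega
  · rw [bLabel_of_lt (hd ▸ h₂.1)]
    exact fun heq => (mem_missingLabels.mp (List.getElem_mem _)).2.1 (heq.trans hd.symm)
  all_goals rw [hd] at h₃; omega

theorem bLabel_ne_of_adj {n q x y : ℕ} (h : binomialTree.Adj x y) :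
    bLabel n q x ≠ bLabel n q y := by
  rcases binomialTree_adj_iff.mp h with ⟨t, ht, rfl⟩ | ⟨t, ht, rfl⟩
  exacts [(bLabel_add_two_pow_ne ht).symm, bLabel_add_two_pow_ne ht]

/-- The children `p + 2 ^ t` carrying missing labels have `t ≥ n + 2 - q`, so they are not
b-vertices: `q ≤ 2 ^ (n + 2 - q) ≤ 2 ^ t`. -/
theorem exists_adj_bLabel_eq {n q p y : ℕ} (hq : 2 ≤ q) (hqn : q ≤ n + 1)
    (hpow : q ≤ 2 ^ (n + 2 - q)) (hp : p < q) (hy : y < q) (hyp : y ≠ p) :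
    ∃ z < 2 ^ n, binomialTree.Adj p z ∧ bLabel n q z = y := by
  by_cases hpy : binomialTree.Adj p y
  · exact ⟨y, hy.trans_le (hpow.trans (Nat.pow_le_pow_right Nat.two_pos (by omega))),
      hpy, bLabel_of_lt hy⟩
  have hl := List.idxOf_lt_length_iff.mpr (mem_missingLabels.mpr ⟨hy, hyp, hpy⟩)
  have hlen := length_missingLabels_le hq hp
  set l := (missingLabels q p).idxOf y
  have hqt : q ≤ 2 ^ (n - 1 - l) := hpow.trans (Nat.pow_le_pow_right Nat.two_pos (by omega))
  have htn : 2 ^ (n - 1 - l + 1) ≤ 2 ^ n := Nat.pow_le_pow_right Nat.two_pos (by omega)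
  rw [pow_succ] at htn
  refine ⟨p + 2 ^ (n - 1 - l), by omega, binomialTree_adj_add_two_pow (by omega), ?_⟩
  rw [bLabel_add_two_pow hp (by omega) hqt (by omega)]
  simp only [show n - 1 - (n - 1 - l) = l by omega]
  exact List.getElem_idxOf hl

theorem isBColoring_atomGraph_bLabel {n q : ℕ} (hq : 2 ≤ q) (hqn : q ≤ n + 1)
    (hpow : q ≤ 2 ^ (n + 2 - q)) :
    IsBColoring (atomGraph n) q fun v => bLabel n q v.toNat + 1 := by
  have hq2n : q ≤ 2 ^ n := hpow.trans (Nat.pow_le_pow_right Nat.two_pos (by omega))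
  refine ⟨fun v => Finset.mem_Icc.mpr ⟨Nat.le_add_left _ _, bLabel_lt hq _⟩,
    fun v w hvw h => bLabel_ne_of_adj ((atomGraph_adj_iff v w).mp hvw) (Nat.add_right_cancel h),
    fun i hi => ?_⟩
  rw [Finset.mem_Icc] at hi
  obtain ⟨v, hv⟩ := exists_toNat_eq (n := n) (x := i - 1) (by omega)
  refine ⟨v, by dsimp only; rw [hv, bLabel_of_lt (by omega)]; omega, fun j hj hji => ?_⟩
  rw [Finset.mem_Icc] at hj
  obtain ⟨z, hz, hadj, hlabel⟩ :=
    exists_adj_bLabel_eq hq hqn hpow (p := i - 1) (y := j - 1) (by omega) (by omega) (by omega)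
  obtain ⟨w, rfl⟩ := exists_toNat_eq hz
  exact ⟨w, (atomGraph_adj_iff v w).mpr (hv ▸ hadj), by dsimp only; rw [hlabel]; omega⟩

theorem mParam_le_bChromatic_atomGraph (n : ℕ) :
    mParam (atomGraph n) ≤ bChromatic (atomGraph n) := by
  rcases eq_or_ne n 0 with rfl | hn
  · have : Nonempty (atomV 0) := ⟨()⟩
    exact mParam_atomGraph_zero_le.trans (isBColoring_one fun _ _ => id).le_bChromatic_s10
  have hm := two_le_mParam_atomGraph hn
  obtain ⟨hmn, hpow⟩ :=
    (mParamAdmissible_mParam (G := atomGraph n)).le_succ_and_le_two_pow (by omega)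
  exact (isBColoring_atomGraph_bLabel hm hmn hpow).le_bChromatic_s10

theorem treeAtom_not_pivoted_general (k : ℕ) :
    ¬ Pivoted (treeAtom k) ∧ bChromatic (treeAtom k) = mParam (treeAtom k) :=
  ⟨not_pivoted_atomGraph (k - 1),
    le_antisymm bChromatic_le_mParam (mParam_le_bChromatic_atomGraph (k - 1))⟩

/-- `T_k` is not pivoted; consequently `b(T_k) = m(T_k)`. -/
theorem treeAtom_not_pivoted (k : ℕ) (hk : 1 ≤ k) :
    ¬ Pivoted (treeAtom k) ∧ bChromatic (treeAtom k) = mParam (treeAtom k) :=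
  treeAtom_not_pivoted_general k
end

section
/- For any graph G with Grundy number k, there exist vertices u_1, ..., u_{⌈k/2⌉} such that deg(u_j) ≥ k − j for each j; hence the non-increasing degree sequence satisfies d_{⌊k/2⌋} ≥ ⌈k/2⌉ ≥ ⌊k/2⌋ − 1, which yields m(G) ≥ ⌊Γ(G)/2⌋. -/
open SimpleGraph

/-! A Grundy coloring with `k = Γ(G)` colors uses every color, and a vertex of color `i` has
neighbors of the `i - 1` smaller colors. So the vertices chosen in the colors `k, k - 1, …` are
distinct with degrees at least `k - 1, k - 2, …`, and the first `⌊k/2⌋` of them all have degree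
at least `k - ⌊k/2⌋ ≥ ⌊k/2⌋ - 1`. -/

section

variable {V : Type*} {G : SimpleGraph V} {k : ℕ} {c : V → ℕ}

theorem IsGrundyColoring.sub_one_le_ncard_neighborSet (hc : IsGrundyColoring G k c) {v : V}
    (hv : (G.neighborSet v).Finite) : c v - 1 ≤ (G.neighborSet v).ncard := by
  have hsub : Set.Ico 1 (c v) ⊆ c '' G.neighborSet v := fun i ⟨h1, h2⟩ =>
    let ⟨w, hvw, hcw⟩ := hc.2.2.2 v i h1 h2
    ⟨w, hvw, hcw⟩
  calc c v - 1 = (Set.Ico 1 (c v)).ncard := (Set.ncard_Ico_nat 1 (c v)).symm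
    _ ≤ (c '' G.neighborSet v).ncard := Set.ncard_le_ncard hsub (hv.image c)
    _ ≤ (G.neighborSet v).ncard := Set.ncard_image_le hv

theorem IsGrundyColoring.le_card [Finite V] (hc : IsGrundyColoring G k c) : k ≤ Nat.card V := by
  have hsub : Set.Icc 1 k ⊆ Set.range c := fun i hi =>
    hc.2.2.1 i (Finset.mem_Icc.mpr hi)
  calc k = (Set.Icc 1 k).ncard := by simp
    _ ≤ (Set.range c).ncard := Set.ncard_le_ncard hsub
    _ ≤ Nat.card V := Finite.card_range_le c

theorem exists_isGrundyColoring_grundyNumber [Finite V] (h : grundyNumber G ≠ 0) :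
    ∃ c, IsGrundyColoring G (grundyNumber G) c := by
  have hne : {k | ∃ c, IsGrundyColoring G k c}.Nonempty := by
    by_contra hempty
    rw [Set.not_nonempty_iff_eq_empty] at hempty
    exact h (by rw [grundyNumber, hempty, csSup_empty, bot_eq_zero])
  exact Nat.sSup_mem hne ⟨Nat.card V, fun _ ⟨_, hc⟩ => hc.le_card⟩

theorem IsGrundyColoring.exists_injective_degree_ge [Finite V] (hc : IsGrundyColoring G k c) :
    ∃ u : Fin k → V, Function.Injective u ∧
      ∀ j : Fin k, k - ((j : ℕ) + 1) ≤ (G.neighborSet (u j)).ncard := by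
  have hcolor (j : Fin k) : ∃ v, c v = k - j :=
    hc.2.2.1 _ (Finset.mem_Icc.mpr ⟨by omega, by omega⟩)
  choose u hu using hcolor
  refine ⟨u, fun i j hij => Fin.ext ?_, fun j => ?_⟩
  · have := hu i
    rw [hij, hu j] at this
    omega
  · have := hc.sub_one_le_ncard_neighborSet (Set.toFinite (G.neighborSet (u j)))
    rw [hu j] at this
    omega

theorem exists_injective_degree_ge_grundyNumber [Finite V] :
    ∃ u : Fin (grundyNumber G) → V, Function.Injective u ∧
      ∀ j : Fin (grundyNumber G),
        grundyNumber G - ((j : ℕ) + 1) ≤ (G.neighborSet (u j)).ncard := by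
  by_cases h : grundyNumber G = 0
  · rw [h]
    exact ⟨Fin.elim0, fun i => i.elim0, fun j => j.elim0⟩
  · obtain ⟨c, hc⟩ := exists_isGrundyColoring_grundyNumber h
    exact hc.exists_injective_degree_ge

theorem card_le_mParam [Finite V] {s : Finset V}
    (hs : ∀ v ∈ s, s.card - 1 ≤ (G.neighborSet v).ncard) : s.card ≤ mParam G :=
  le_csSup ⟨Nat.card V, fun _ ⟨t, ht, _⟩ => ht ▸ Set.ncard_coe_finset t ▸ Set.ncard_le_card _⟩
    ⟨s, rfl, hs⟩

theorem le_mParam_of_injective [Finite V] {n : ℕ} (u : Fin n → V) (hu : Function.Injective u)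
    (hdeg : ∀ j, n - 1 ≤ (G.neighborSet (u j)).ncard) : n ≤ mParam G := by
  classical
  simpa using card_le_mParam (s := Finset.univ.map ⟨u, hu⟩) (G := G) (by simpa using hdeg)

end

/-- with `k = Γ(G)`, there are distinct vertices `u_1, …, u_{⌈k/2⌉}` with
`deg (u_j) ≥ k - j`; in particular `m(G) ≥ ⌊Γ(G)/2⌋`. -/
theorem mParam_ge_half_grundy {V : Type*} [Fintype V] (G : SimpleGraph V) :
    (∃ u : Fin ((grundyNumber G + 1) / 2) → V, Function.Injective u ∧
        ∀ j : Fin ((grundyNumber G + 1) / 2), grundyNumber G - ((j : ℕ) + 1) ≤ (G.neighborSet (u j)).ncard) ∧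
      grundyNumber G / 2 ≤ mParam G := by
  obtain ⟨u, hu, hdeg⟩ := exists_injective_degree_ge_grundyNumber (G := G)
  have hceil : (grundyNumber G + 1) / 2 ≤ grundyNumber G := by omega
  have hfloor : grundyNumber G / 2 ≤ grundyNumber G := by omega
  refine ⟨⟨u ∘ Fin.castLE hceil, hu.comp (Fin.castLE_injective hceil),
    fun j => hdeg (Fin.castLE hceil j)⟩, ?_⟩
  refine le_mParam_of_injective (u ∘ Fin.castLE hfloor) (hu.comp (Fin.castLE_injective hfloor))
    fun j => ?_
  have := hdeg (Fin.castLE hfloor j)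
  simp only [Function.comp_apply, Fin.val_castLE] at this ⊢
  omega
end
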